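/- For p, q ∈ ℝ³ with p⁰ = √(1+|p|²), q⁰ = √(1+|q|²), the relative momentum satisfies the coercive lower bound g ≥ √(|p−q|² + |p×q|²) / √(p⁰ q⁰), where p×q is the cross product in ℝ³. -/

import Mathlib

noncomputable def energy (p : EuclideanSpace ℝ (Fin 3)) : ℝ := Real.sqrt (1 + ‖p‖ ^ 2)

noncomputable def cross3 (p q : EuclideanSpace ℝ (Fin 3)) : EuclideanSpace ℝ (Fin 3) :=
  (EuclideanSpace.equiv (Fin 3) ℝ).symm
    ![p 1 * q 2 - p 2 * q 1, p 2 * q 0 - p 0 * q 2, p 0 * q 1 - p 1 * q 0]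

lemma key_identity (p q : EuclideanSpace ℝ (Fin 3)) :
    ‖p - q‖ ^ 2 + ‖cross3 p q‖ ^ 2 =
      (1 + ‖p‖ ^ 2) * (1 + ‖q‖ ^ 2) - (1 + (inner ℝ p q : ℝ)) ^ 2 := by
  rw [← real_inner_self_eq_norm_sq, ← real_inner_self_eq_norm_sq,
    ← real_inner_self_eq_norm_sq, ← real_inner_self_eq_norm_sq]
  simp only [PiLp.inner_apply, RCLike.inner_apply, conj_trivial, Fin.sum_univ_three, cross3,
    EuclideanSpace.equiv, PiLp.sub_apply, LinearEquiv.coe_symm_mk, Matrix.cons_val_zero,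
    Matrix.cons_val_one, Matrix.head_cons, Matrix.cons_val_two, Matrix.tail_cons]
  have h0 : ∀ i, (EuclideanSpace.equiv (Fin 3) ℝ).symm
      ![p 1 * q 2 - p 2 * q 1, p 2 * q 0 - p 0 * q 2, p 0 * q 1 - p 1 * q 0] i =
      ![p 1 * q 2 - p 2 * q 1, p 2 * q 0 - p 0 * q 2, p 0 * q 1 - p 1 * q 0] i := fun _ => rfl
  simp only [h0, Matrix.cons_val_zero, Matrix.cons_val_one, Matrix.head_cons, Matrix.cons_val_two,
    Matrix.tail_cons]
  ring

theorem g_coercive_lower_bound (p q : EuclideanSpace ℝ (Fin 3)) :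
    Real.sqrt (‖p - q‖ ^ 2 + ‖cross3 p q‖ ^ 2) / Real.sqrt (energy p * energy q) ≤
      Real.sqrt (2 * (energy p * energy q - (inner ℝ p q : ℝ) - 1)) := by
  set a := energy p * energy q with ha
  set b := 1 + (inner ℝ p q : ℝ) with hb
  have hX : (0:ℝ) ≤ ‖p - q‖ ^ 2 + ‖cross3 p q‖ ^ 2 := by positivity
  have hep : energy p ^ 2 = 1 + ‖p‖ ^ 2 := Real.sq_sqrt (by positivity)
  have heq : energy q ^ 2 = 1 + ‖q‖ ^ 2 := Real.sq_sqrt (by positivity)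
  have hep1 : 1 ≤ energy p := by
    rw [energy]
    nth_rewrite 1 [show (1:ℝ) = Real.sqrt 1 by simp]
    exact Real.sqrt_le_sqrt (le_add_of_nonneg_right (sq_nonneg _))
  have heq1 : 1 ≤ energy q := by
    rw [energy]
    nth_rewrite 1 [show (1:ℝ) = Real.sqrt 1 by simp]
    exact Real.sqrt_le_sqrt (le_add_of_nonneg_right (sq_nonneg _))
  have ha1 : 1 ≤ a := by nlinarith
  have hid : ‖p - q‖ ^ 2 + ‖cross3 p q‖ ^ 2 = a ^ 2 - b ^ 2 := by
    rw [key_identity p q, hb, ha, mul_pow, hep, heq]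
  rw [← Real.sqrt_div hX]
  apply Real.sqrt_le_sqrt
  rw [hid, div_le_iff₀ (by linarith)]
  nlinarith [sq_nonneg (a - b), hX.trans_eq hid]
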